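/- There exists m₀ ∈ ℕ such that for every m ≥ m₀, every i ∈ {1,…,m}, every ε ∈ [-1,1] with |ε| ≤ 4·√(log m / s_1), and every y ∈ ℤ with |y + ε·s_i| > 4·√(log m · s_i), it holds that V(s_i, ε)(−y) < 1/m² or V(s_i, ε)(−y) > 1 − 1/m². -/

import Mathlib

/-!
Both tails are handled by Hoeffding's inequality for a sum of `n` independent `Ber(ε)` signs:
`Pr[X ≥ εn + d] ≤ exp(-d²/(2n))`. With `d = 4 √(log m · n)` the bound is `exp(-8 log m) < 1/m²`,
and the lower tail follows from the upper tail of `Ber(-ε)` through `X ↦ -X`.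
-/

noncomputable def binPMF (n : ℕ) (ε : ℝ) (k : ℤ) : ℝ :=
  if ((n : ℤ) + k) % 2 = 0 ∧ -(n : ℤ) ≤ k ∧ k ≤ (n : ℤ) then
    (n.choose (((n : ℤ) + k) / 2).toNat : ℝ) *
      ((1 + ε) / 2) ^ (((n : ℤ) + k) / 2).toNat *
      ((1 - ε) / 2) ^ (((n : ℤ) - k) / 2).toNat
  else 0

noncomputable def binTail (n : ℕ) (ε : ℝ) (k : ℤ) : ℝ :=
  ∑ t ∈ Finset.Icc k (n : ℤ), binPMF n ε t

def lRound (m i : ℕ) : ℕ := m + 1 - i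

def sRound (m i : ℕ) : ℕ := ∑ j ∈ Finset.Icc i m, lRound m j

open Real MeasureTheory ProbabilityTheory Finset

/-- Hoeffding's lemma for the `±1` variable of mean `ε`, realised as a two-point measure on `ℝ`. -/
lemma pm_one_mgf_le {ε : ℝ} (hε : ε ∈ Set.Icc (-1 : ℝ) 1) (t : ℝ) :
    (1 + ε) / 2 * exp t + (1 - ε) / 2 * exp (-t) ≤ exp (ε * t + t ^ 2 / 2) := by
  obtain ⟨h1, h2⟩ := hε
  set μ : Measure ℝ := ENNReal.ofReal ((1 + ε) / 2) • Measure.dirac 1 +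
    ENNReal.ofReal ((1 - ε) / 2) • Measure.dirac (-1)
  have hint (f : ℝ → ℝ) : ∫ x, f x ∂μ = (1 + ε) / 2 * f 1 + (1 - ε) / 2 * f (-1) := by
    rw [integral_add_measure, integral_smul_measure, integral_smul_measure, integral_dirac,
      integral_dirac, ENNReal.toReal_ofReal (by linarith), ENNReal.toReal_ofReal (by linarith),
      smul_eq_mul, smul_eq_mul]
    all_goals exact (integrable_dirac enorm_lt_top).smul_measure ENNReal.ofReal_ne_top
  have : IsProbabilityMeasure μ := ⟨by
    simp only [μ, Measure.add_apply, Measure.smul_apply, measure_univ, smul_eq_mul, mul_one]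
    rw [← ENNReal.ofReal_add (by linarith) (by linarith), ← add_div, add_add_sub_cancel]
    norm_num⟩
  have hsupp : ∀ᵐ x ∂μ, x - ε ∈ Set.Icc (-1 - ε) (1 - ε) := by
    simp only [μ, ae_add_measure_iff]
    constructor <;> apply Measure.ae_smul_measure <;>
      rw [ae_dirac_eq, Filter.eventually_pure] <;> constructor <;> linarith
  have hmgf := (hasSubgaussianMGF_of_mem_Icc_of_integral_eq_zero (by fun_prop) hsupp
    (by rw [hint]; ring)).mgf_le t
  rw [mgf, hint] at hmgf
  norm_num at hmgf
  calc (1 + ε) / 2 * exp t + (1 - ε) / 2 * exp (-t)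
      = exp (ε * t) * ((1 + ε) / 2 * exp (t * (1 - ε)) + (1 - ε) / 2 * exp (t * (-1 - ε))) := by
        rw [mul_add, mul_left_comm, ← exp_add, mul_left_comm, ← exp_add]
        ring_nf
    _ ≤ exp (ε * t) * exp (t ^ 2 / 2) := by gcongr
    _ = exp (ε * t + t ^ 2 / 2) := (exp_add _ _).symm

section binomial

variable {n : ℕ} {ε : ℝ}

lemma binPMF_eq_zero_of_notMem_Icc {k : ℤ} (hk : k ∉ Icc (-(n : ℤ)) n) : binPMF n ε k = 0 := by
  rw [binPMF, if_neg]
  rw [mem_Icc] at hk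
  tauto

lemma binPMF_nonneg (hε : ε ∈ Set.Icc (-1 : ℝ) 1) (k : ℤ) : 0 ≤ binPMF n ε k := by
  obtain ⟨h1, h2⟩ := hε
  unfold binPMF
  split
  · have : 0 ≤ 1 + ε := by linarith
    have : 0 ≤ 1 - ε := by linarith
    positivity
  · exact le_rfl

lemma binPMF_two_mul_sub {j : ℕ} (hj : j ≤ n) :
    binPMF n ε (2 * j - n) = n.choose j * ((1 + ε) / 2) ^ j * ((1 - ε) / 2) ^ (n - j) := by
  rw [binPMF, if_pos (by omega)]
  have hplus : (((n : ℤ) + (2 * j - n)) / 2).toNat = j := by omega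
  have hminus : (((n : ℤ) - (2 * j - n)) / 2).toNat = n - j := by omega
  rw [hplus, hminus]

lemma binPMF_neg (n : ℕ) (ε : ℝ) (k : ℤ) : binPMF n ε (-k) = binPMF n (-ε) k := by
  by_cases h : ((n : ℤ) + k) % 2 = 0 ∧ -(n : ℤ) ≤ k ∧ k ≤ n
  · rw [binPMF, binPMF, if_pos (by omega), if_pos h]
    have hplus : (((n : ℤ) + -k) / 2).toNat = (((n : ℤ) - k) / 2).toNat := by omega
    have hminus : (((n : ℤ) - -k) / 2).toNat = n - (((n : ℤ) - k) / 2).toNat := by omega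
    have hchoose : (((n : ℤ) + k) / 2).toNat = n - (((n : ℤ) - k) / 2).toNat := by omega
    rw [hplus, hminus, hchoose, Nat.choose_symm (by omega)]
    ring_nf
  · rw [binPMF, binPMF, if_neg (by omega), if_neg h]

lemma sum_binPMF_mul_exp (n : ℕ) (ε t : ℝ) :
    ∑ k ∈ Icc (-(n : ℤ)) n, binPMF n ε k * exp (t * k) =
      ((1 + ε) / 2 * exp t + (1 - ε) / 2 * exp (-t)) ^ n := by
  have hsupp : (range (n + 1)).image (fun j : ℕ ↦ 2 * (j : ℤ) - n) ⊆ Icc (-(n : ℤ)) n := by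
    intro k hk
    simp only [mem_image, mem_range] at hk
    obtain ⟨j, hj, rfl⟩ := hk
    rw [mem_Icc]
    omega
  rw [← sum_subset hsupp, sum_image (fun a _ b _ h ↦ by omega), add_pow]
  · refine sum_congr rfl fun j hj ↦ ?_
    have hjn : j ≤ n := Nat.lt_succ_iff.mp (mem_range.mp hj)
    have hexp : exp (t * ((2 * j - n : ℤ) : ℝ)) = exp t ^ j * exp (-t) ^ (n - j) := by
      rw [← exp_nat_mul, ← exp_nat_mul, ← exp_add]
      push_cast [Nat.cast_sub hjn]
      ring_nf
    rw [binPMF_two_mul_sub hjn, hexp, mul_pow, mul_pow]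
    ring
  · intro k hk hnot
    suffices binPMF n ε k = 0 by rw [this, zero_mul]
    rw [binPMF, if_neg]
    rintro ⟨hpar, hlo, hhi⟩
    exact hnot (mem_image.mpr ⟨(((n : ℤ) + k) / 2).toNat, mem_range.mpr (by omega), by omega⟩)

lemma sum_binPMF (n : ℕ) (ε : ℝ) : ∑ k ∈ Icc (-(n : ℤ)) n, binPMF n ε k = 1 := by
  have h := sum_binPMF_mul_exp n ε 0
  simp only [zero_mul, exp_zero, mul_one, neg_zero] at h
  rw [h]
  ring

lemma binTail_eq_sum_filter (k : ℤ) :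
    binTail n ε k = ∑ t ∈ Icc (-(n : ℤ)) n with k ≤ t, binPMF n ε t := by
  refine (sum_subset (fun t ht ↦ ?_) fun t ht hnot ↦ binPMF_eq_zero_of_notMem_Icc ?_).symm
  · simp only [mem_filter, mem_Icc] at ht ⊢
    omega
  · simp only [mem_filter, mem_Icc] at ht hnot ⊢
    omega

lemma binTail_add_binTail_neg (n : ℕ) (ε : ℝ) (k : ℤ) :
    binTail n ε k + binTail n (-ε) (1 - k) = 1 := by
  have hrefl : binTail n (-ε) (1 - k) = ∑ t ∈ Icc (-(n : ℤ)) n with ¬ k ≤ t, binPMF n ε t := by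
    rw [binTail_eq_sum_filter]
    refine sum_nbij' (fun t ↦ -t) (fun t ↦ -t) ?_ ?_ (fun _ _ ↦ neg_neg _) (fun _ _ ↦ neg_neg _)
      fun t _ ↦ (binPMF_neg n ε t).symm
    all_goals
      intro t ht
      simp only [mem_filter, mem_Icc] at ht ⊢
      omega
  rw [hrefl, binTail_eq_sum_filter, sum_filter_add_sum_filter_not, sum_binPMF]

/-- Chernoff's bound `Pr[X ≥ k] ≤ e^{-tk} E[e^{tX}]`. -/
lemma binTail_le_exp_mul_mgf (hε : ε ∈ Set.Icc (-1 : ℝ) 1) {t : ℝ} (ht : 0 ≤ t) (k : ℤ) :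
    binTail n ε k ≤ exp (-(t * k)) * ((1 + ε) / 2 * exp t + (1 - ε) / 2 * exp (-t)) ^ n := by
  rw [← sum_binPMF_mul_exp, mul_sum, binTail_eq_sum_filter]
  calc ∑ s ∈ Icc (-(n : ℤ)) n with k ≤ s, binPMF n ε s
      ≤ ∑ s ∈ Icc (-(n : ℤ)) n with k ≤ s, exp (-(t * k)) * (binPMF n ε s * exp (t * s)) := by
        refine sum_le_sum fun s hs ↦ ?_
        have hks : (k : ℝ) ≤ s := by exact_mod_cast (mem_filter.mp hs).2
        have hexp : 1 ≤ exp (-(t * k)) * exp (t * s) := by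
          rw [← exp_add]
          exact one_le_exp (by nlinarith)
        nlinarith [binPMF_nonneg (n := n) hε s]
    _ ≤ ∑ s ∈ Icc (-(n : ℤ)) n, exp (-(t * k)) * (binPMF n ε s * exp (t * s)) :=
        sum_le_sum_of_subset_of_nonneg (filter_subset _ _)
          fun s _ _ ↦ mul_nonneg (exp_nonneg _) (mul_nonneg (binPMF_nonneg hε s) (exp_nonneg _))

/-- Hoeffding's inequality for `B(n, ε)`, obtained from Chernoff's bound at `t = d / n`. -/
lemma binTail_le_exp_neg_sq (hn : 0 < n) (hε : ε ∈ Set.Icc (-1 : ℝ) 1) {d : ℝ} (hd : 0 ≤ d)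
    {k : ℤ} (hk : ε * n + d ≤ k) : binTail n ε k ≤ exp (-(d ^ 2 / (2 * n))) := by
  have hn' : (0 : ℝ) < n := Nat.cast_pos.mpr hn
  set t := d / n with ht
  have hbase : 0 ≤ (1 + ε) / 2 * exp t + (1 - ε) / 2 * exp (-t) := by
    obtain ⟨h1, h2⟩ := hε
    have : 0 ≤ 1 + ε := by linarith
    have : 0 ≤ 1 - ε := by linarith
    positivity
  have htk : t * (ε * n + d) ≤ t * k := mul_le_mul_of_nonneg_left hk (by positivity)
  calc binTail n ε k
      ≤ exp (-(t * k)) * ((1 + ε) / 2 * exp t + (1 - ε) / 2 * exp (-t)) ^ n :=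
        binTail_le_exp_mul_mgf hε (by positivity) k
    _ ≤ exp (-(t * k)) * exp (ε * t + t ^ 2 / 2) ^ n := by
        gcongr
        exact pm_one_mgf_le hε t
    _ = exp (-(t * k) + n * (ε * t + t ^ 2 / 2)) := by rw [← exp_nat_mul, ← exp_add]
    _ ≤ exp (-(d ^ 2 / (2 * n))) := by
        gcongr
        have hsq : t * (ε * n + d) = ε * t * n + d ^ 2 / n := by
          rw [ht]; field_simp
        have hsq' : n * (t ^ 2 / 2) = d ^ 2 / (2 * n) := by
          rw [ht]; field_simp
        have : d ^ 2 / n = 2 * (d ^ 2 / (2 * n)) := by field_simp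
        nlinarith

lemma one_sub_exp_neg_sq_le_binTail (hn : 0 < n) (hε : ε ∈ Set.Icc (-1 : ℝ) 1) {d : ℝ}
    (hd : 0 ≤ d) {k : ℤ} (hk : k + d ≤ ε * n) : 1 - exp (-(d ^ 2 / (2 * n))) ≤ binTail n ε k := by
  have hneg : -ε ∈ Set.Icc (-1 : ℝ) 1 := ⟨by linarith [hε.2], by linarith [hε.1]⟩
  have hupper := binTail_le_exp_neg_sq hn hneg hd (k := 1 - k) (by push_cast; linarith)
  linarith [binTail_add_binTail_neg n ε k]

end binomial

lemma sRound_pos {m i : ℕ} (hi : i ≤ m) : 0 < sRound m i :=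
  sum_pos (fun j hj ↦ by rw [mem_Icc] at hj; unfold lRound; omega) ⟨m, mem_Icc.mpr ⟨hi, le_rfl⟩⟩

lemma exp_neg_eight_mul_logb_lt {x : ℝ} (hx : 1 < x) : exp (-(8 * logb 2 x)) < 1 / x ^ 2 := by
  have hlog : 0 < log x := log_pos hx
  have hlogb : log x ≤ logb 2 x := by
    rw [logb, le_div_iff₀ (log_pos one_lt_two)]
    nlinarith [log_two_lt_d9]
  rw [one_div, ← exp_log (by positivity : 0 < x ^ 2), ← exp_neg, exp_lt_exp, log_pow]
  push_cast
  linarith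

theorem stmt_14 :
    ∃ m0 : ℕ, ∀ m : ℕ, m0 ≤ m → ∀ i : ℕ, 1 ≤ i → i ≤ m →
      ∀ ε : ℝ, ε ∈ Set.Icc (-1 : ℝ) 1 →
        |ε| ≤ 4 * Real.sqrt (Real.logb 2 m / (sRound m 1 : ℝ)) →
        ∀ y : ℤ, 4 * Real.sqrt (Real.logb 2 m * (sRound m i : ℝ)) <
            |(y : ℝ) + ε * (sRound m i : ℝ)| →
          binTail (sRound m i) ε (-y) < 1 / (m : ℝ) ^ 2 ∨
            1 - 1 / (m : ℝ) ^ 2 < binTail (sRound m i) ε (-y) := by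
  refine ⟨2, fun m hm i _ him ε hε _ y hy ↦ ?_⟩
  have hm' : (1 : ℝ) < m := by exact_mod_cast hm
  have hn := sRound_pos him
  set n := sRound m i
  set d := 4 * √(logb 2 m * n)
  have hd : d ^ 2 / (2 * n) = 8 * logb 2 m := by
    have hn' : (n : ℝ) ≠ 0 := by positivity
    rw [mul_pow, sq_sqrt (mul_nonneg (logb_nonneg one_lt_two hm'.le) n.cast_nonneg)]
    field_simp
    ring
  have hsmall := exp_neg_eight_mul_logb_lt hm'
  rcases lt_abs.mp hy with hupper | hlower
  · right
    have := one_sub_exp_neg_sq_le_binTail hn hε (d := d) (by positivity) (k := -y)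
      (by push_cast; linarith)
    rw [hd] at this
    linarith
  · left
    have := binTail_le_exp_neg_sq hn hε (d := d) (by positivity) (k := -y)
      (by push_cast; linarith)
    rw [hd] at this
    linarith
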